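/- For any h with 1 ≤ h ≤ n−1, the h-embedded edge-connectivity of the hypercube is exactly η_h(Q_n) = 2^h (n−h). -/

import Mathlib

open SimpleGraph

def cubeGraph (n : ℕ) : SimpleGraph (Fin n → Bool) where
  Adj x y := ∃! i, x i ≠ y i
  symm := by
    constructor
    rintro x y ⟨i, hi, hu⟩
    exact ⟨i, hi.symm, fun j hj => hu j hj.symm⟩
  loopless := by constructor; rintro x ⟨i, hi, -⟩; exact hi rfl

def starGraph (n : ℕ) [NeZero n] : SimpleGraph (Equiv.Perm (Fin n)) where
  Adj x y := ∃ i : Fin n, i ≠ 0 ∧ y = x * Equiv.swap 0 i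
  symm := by
    constructor
    rintro x y ⟨i, hi, rfl⟩
    exact ⟨i, hi, by rw [mul_assoc, Equiv.swap_mul_self, mul_one]⟩
  loopless := by
    constructor
    rintro x ⟨i, hi, h⟩
    exact hi (Equiv.swap_eq_one_iff.mp (left_eq_mul.mp h)).symm

def bubbleGraph (n : ℕ) : SimpleGraph (Equiv.Perm (Fin n)) where
  Adj x y := ∃ (i : Fin n) (hi : (i : ℕ) + 1 < n), y = x * Equiv.swap i ⟨(i : ℕ) + 1, hi⟩
  symm := by
    constructor
    rintro x y ⟨i, hi, rfl⟩
    exact ⟨i, hi, by rw [mul_assoc, Equiv.swap_mul_self, mul_one]⟩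
  loopless := by
    constructor
    rintro x ⟨i, hi, h⟩
    have h1 := Equiv.swap_eq_one_iff.mp (left_eq_mul.mp h)
    have := congrArg Fin.val h1
    simp at this

def IsEmbVertexCut {V W : Type*} (G : SimpleGraph V) (H : SimpleGraph W) (S : Set V) : Prop :=
  ¬ (G.induce Sᶜ).Connected ∧
    ∀ v ∉ S, ∃ A : Set V, v ∈ A ∧ Disjoint A S ∧ Nonempty (H ≃g G.induce A)

noncomputable def embConn {V W : Type*} (G : SimpleGraph V) (H : SimpleGraph W) : ℕ :=
  sInf {k | ∃ S : Set V, S.Finite ∧ S.ncard = k ∧ IsEmbVertexCut G H S}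

def IsEmbEdgeCut {V W : Type*} (G : SimpleGraph V) (H : SimpleGraph W) (F : Set (Sym2 V)) : Prop :=
  F ⊆ G.edgeSet ∧ ¬ (G.deleteEdges F).Connected ∧
    ∀ v : V, ∃ A : Set V, v ∈ A ∧ Nonempty (H ≃g (G.deleteEdges F).induce A)

noncomputable def embEdgeConn {V W : Type*} (G : SimpleGraph V) (H : SimpleGraph W) : ℕ :=
  sInf {k | ∃ F : Set (Sym2 V), F.Finite ∧ F.ncard = k ∧ IsEmbEdgeCut G H F}

def IsSuperVertexCut {V : Type*} (G : SimpleGraph V) (h : ℕ) (S : Set V) : Prop :=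
  ¬ (G.induce Sᶜ).Connected ∧ ∀ v ∉ S, h ≤ ((G.neighborSet v) \ S).ncard

noncomputable def superConn {V : Type*} (G : SimpleGraph V) (h : ℕ) : ℕ :=
  sInf {k | ∃ S : Set V, S.Finite ∧ S.ncard = k ∧ IsSuperVertexCut G h S}

def IsSuperEdgeCut {V : Type*} (G : SimpleGraph V) (h : ℕ) (F : Set (Sym2 V)) : Prop :=
  F ⊆ G.edgeSet ∧ ¬ (G.deleteEdges F).Connected ∧
    ∀ v : V, h ≤ ((G.deleteEdges F).neighborSet v).ncard

noncomputable def superEdgeConn {V : Type*} (G : SimpleGraph V) (h : ℕ) : ℕ :=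
  sInf {k | ∃ F : Set (Sym2 V), F.Finite ∧ F.ncard = k ∧ IsSuperEdgeCut G h F}

/-
The lower bound rests on the edge-isoperimetric inequality of the cube: a vertex set `S` spans
at most `|S| log₂ |S|` ordered adjacent pairs. This goes by induction on `n`, splitting `S` along
the first coordinate into halves of sizes `a` and `b` that share `c ≤ min a b` points, which
contribute `2c` pairs across; then `a log a + b log b + 2c log 2 ≤ (a + b) log (a + b)`.
If `Q_n - F` is disconnected and every vertex lies in a fault-free `Q_h`, all degrees in
`Q_n - F` are at least `h`. For the smaller side `S` of a union of components this gives
`h |S| ≤ |S| log₂ |S|`, so `|S| ≥ 2^h`, and `|F| ≥ |∂S| ≥ |S| (n - log₂ |S|)`. The right side is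
concave in `|S|`, so on `[2^h, 2^(n-1)]` it is at least its smaller endpoint value `2^h (n - h)`.
The edges leaving the subcube `{x | x i = false for i ≥ h}` form a cut of exactly this size.
-/

open Finset Real

namespace SimpleGraph

section Interedges

variable {V : Type*} (G : SimpleGraph V) [DecidableRel G.Adj]

lemma card_interedges_eq_sum (s t : Finset V) :
    #(G.interedges s t) = ∑ x ∈ s, #{y ∈ t | G.Adj x y} := by
  simp only [interedges_def, card_filter, sum_product]

variable [Fintype V]

lemma sum_degree_le_card_interedges {H : SimpleGraph V} [DecidableRel H.Adj] (hHG : H ≤ G)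
    {s : Finset V} (hs : ∀ x ∈ s, ∀ y, H.Adj x y → y ∈ s) :
    ∑ x ∈ s, H.degree x ≤ #(G.interedges s s) := by
  rw [card_interedges_eq_sum]
  refine sum_le_sum fun x hx => card_le_card fun y hy => ?_
  rw [mem_neighborFinset] at hy
  exact mem_filter.mpr ⟨hs x hx y hy, hHG hy⟩

variable [DecidableEq V]

lemma card_interedges_add_card_interedges_compl_eq_sum_degree (s : Finset V) :
    #(G.interedges s s) + #(G.interedges s sᶜ) = ∑ x ∈ s, G.degree x := by
  simp only [card_interedges_eq_sum, ← sum_add_distrib, ← card_neighborFinset_eq_degree]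
  refine sum_congr rfl fun x _ => ?_
  rw [← card_filter_add_card_filter_not (s := G.neighborFinset x) (· ∈ s)]
  congr 2 <;> ext y <;> simp [and_comm]

def edgeBoundary (s : Finset V) : Finset (Sym2 V) :=
  (G.interedges s sᶜ).image Sym2.mk.uncurry

variable {G}

lemma mem_edgeBoundary {s : Finset V} {e : Sym2 V} :
    e ∈ G.edgeBoundary s ↔ ∃ x ∈ s, ∃ y ∉ s, G.Adj x y ∧ s(x, y) = e := by
  simp [edgeBoundary, mk_mem_interedges_iff, and_assoc]

lemma card_edgeBoundary (s : Finset V) : #(G.edgeBoundary s) = #(G.interedges s sᶜ) := by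
  refine card_image_of_injOn ?_
  rintro ⟨x, y⟩ hxy ⟨x', y'⟩ hxy' h
  rw [mem_coe, mk_mem_interedges_iff, mem_compl] at hxy hxy'
  rcases Sym2.eq_iff.mp h with ⟨rfl, rfl⟩ | ⟨rfl, rfl⟩
  · rfl
  · exact absurd hxy.1 hxy'.2.1

lemma coe_edgeBoundary_subset_edgeSet (s : Finset V) : ↑(G.edgeBoundary s) ⊆ G.edgeSet := by
  intro e he
  obtain ⟨x, -, y, -, hxy, rfl⟩ := mem_edgeBoundary.mp he
  exact hxy

lemma coe_edgeBoundary_subset {F : Set (Sym2 V)} {s : Finset V}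
    (hs : ∀ x ∈ s, ∀ y, (G.deleteEdges F).Adj x y → y ∈ s) : ↑(G.edgeBoundary s) ⊆ F := by
  intro e he
  obtain ⟨x, hx, y, hy, hxy, rfl⟩ := mem_edgeBoundary.mp he
  by_contra hF
  exact hy (hs x hx y ((deleteEdges_adj ..).mpr ⟨hxy, hF⟩))

lemma deleteEdges_edgeBoundary_adj {s : Finset V} {x y : V} :
    (G.deleteEdges (G.edgeBoundary s)).Adj x y ↔ G.Adj x y ∧ (x ∈ s ↔ y ∈ s) := by
  simp only [deleteEdges_adj, mem_coe, mem_edgeBoundary, Sym2.eq_iff]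
  refine and_congr_right fun hxy => ?_
  constructor
  · intro h
    by_cases hx : x ∈ s <;> by_cases hy : y ∈ s
    · exact iff_of_true hx hy
    · exact absurd ⟨x, hx, y, hy, hxy, .inl ⟨rfl, rfl⟩⟩ h
    · exact absurd ⟨y, hy, x, hx, hxy.symm, .inr ⟨rfl, rfl⟩⟩ h
    · exact iff_of_false hx hy
  · rintro hs ⟨a, ha, b, hb, -, ⟨rfl, rfl⟩ | ⟨rfl, rfl⟩⟩
    · exact hb (hs.mp ha)
    · exact hb (hs.mpr ha)

end Interedges

section Connectivity

variable {V : Type*} {H : SimpleGraph V}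

lemma not_connected_of_forall_adj_mem {s : Set V} (hs : ∀ x ∈ s, ∀ y, H.Adj x y → y ∈ s)
    {a b : V} (ha : a ∈ s) (hb : b ∉ s) : ¬ H.Connected := fun hH => by
  obtain ⟨d, -, hd, hd'⟩ := (hH.preconnected a b).some.exists_boundary_dart s ha hb
  exact hd' (hs _ hd _ d.adj)

lemma exists_forall_adj_mem_of_not_connected [Fintype V] [Nonempty V] (hH : ¬ H.Connected) :
    ∃ s : Finset V, s.Nonempty ∧ 2 * #s ≤ Fintype.card V ∧ ∀ x ∈ s, ∀ y, H.Adj x y → y ∈ s := by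
  classical
  obtain ⟨a, b, hab⟩ : ∃ a b, ¬ H.Reachable a b := by
    simpa [connected_iff, Preconnected] using hH
  set s : Finset V := {x | H.Reachable a x}
  have hs : ∀ x ∈ s, ∀ y, H.Adj x y → y ∈ s := by
    simp only [s, mem_filter, mem_univ, true_and]
    exact fun x hx y hxy => hx.trans hxy.reachable
  have hsc : ∀ x ∈ sᶜ, ∀ y, H.Adj x y → y ∈ sᶜ := by
    simp only [mem_compl]
    exact fun x hx y hxy hy => hx (hs y hy x hxy.symm)
  have hcard := card_add_card_compl s
  by_cases hsmall : 2 * #s ≤ Fintype.card V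
  · exact ⟨s, ⟨a, by simp [s]⟩, hsmall, hs⟩
  · exact ⟨sᶜ, ⟨b, by simpa [s] using hab⟩, by omega, hsc⟩

end Connectivity

end SimpleGraph

section Cube

variable {n : ℕ}

lemma cubeGraph_adj_iff_hammingDist {x y : Fin n → Bool} :
    (cubeGraph n).Adj x y ↔ hammingDist x y = 1 :=
  Fintype.existsUnique_iff_card_one _

instance : DecidableRel (cubeGraph n).Adj :=
  fun _ _ => decidable_of_iff _ cubeGraph_adj_iff_hammingDist.symm

lemma injective_update_not_self (x : Fin n → Bool) :
    Function.Injective fun i => Function.update x i (!x i) := by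
  intro i j hij
  by_contra hne
  simpa [Function.update_of_ne hne] using congrFun hij i

lemma cubeGraph_adj_iff_exists_update {x y : Fin n → Bool} :
    (cubeGraph n).Adj x y ↔ ∃ i, y = Function.update x i (!x i) := by
  constructor
  · rintro ⟨i, hi, hu⟩
    refine ⟨i, funext fun j => ?_⟩
    rcases eq_or_ne j i with rfl | hj
    · rw [Function.update_self]
      exact Bool.eq_not.mpr hi.symm
    · rw [Function.update_of_ne hj]
      exact (not_imp_comm.mp (hu j) hj).symm
  · rintro ⟨i, rfl⟩
    refine ⟨i, by simp, fun j hj => ?_⟩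
    by_contra hji
    exact hj (Function.update_of_ne hji ..).symm

lemma cubeGraph_neighborFinset (x : Fin n → Bool) :
    (cubeGraph n).neighborFinset x = univ.image fun i => Function.update x i (!x i) := by
  ext y
  simp [cubeGraph_adj_iff_exists_update, eq_comm]

lemma cubeGraph_degree (x : Fin n → Bool) : (cubeGraph n).degree x = n := by
  rw [← card_neighborFinset_eq_degree, cubeGraph_neighborFinset,
    card_image_of_injective _ (injective_update_not_self x), card_univ, Fintype.card_fin]

lemma hammingDist_cons {β : Type*} [DecidableEq β] (a b : β) (x y : Fin n → β) :
    hammingDist (Fin.cons a x : Fin (n + 1) → β) (Fin.cons b y) =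
      (if a = b then 0 else 1) + hammingDist x y := by
  simp only [hammingDist, Fin.card_filter_univ_succ', Fin.cons_zero, Fin.cons_succ, ite_not]

lemma cubeGraph_cons_adj_cons {a b : Bool} {x y : Fin n → Bool} :
    (cubeGraph (n + 1)).Adj (Fin.cons a x) (Fin.cons b y) ↔
      a = b ∧ (cubeGraph n).Adj x y ∨ a ≠ b ∧ x = y := by
  simp only [cubeGraph_adj_iff_hammingDist, hammingDist_cons, ← hammingDist_eq_zero]
  split_ifs <;> simp_all

end Cube

section Slice

variable {n : ℕ} {β : Type*}

noncomputable def consSlice (s : Finset (Fin (n + 1) → β)) (b : β) : Finset (Fin n → β) :=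
  s.preimage (Fin.cons (α := fun _ => β) b) (Fin.cons_right_injective _).injOn

lemma mem_consSlice {s : Finset (Fin (n + 1) → β)} {b : β} {x : Fin n → β} :
    x ∈ consSlice s b ↔ (Fin.cons b x : Fin (n + 1) → β) ∈ s :=
  mem_preimage

lemma sum_eq_sum_consSlice [Fintype β] {M : Type*} [AddCommMonoid M]
    (s : Finset (Fin (n + 1) → β)) (f : (Fin (n + 1) → β) → M) :
    ∑ x ∈ s, f x = ∑ b, ∑ x ∈ consSlice s b, f (Fin.cons b x) := by
  set e := Fin.consEquiv fun _ : Fin (n + 1) => β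
  calc ∑ x ∈ s, f x = ∑ p ∈ s.map e.symm.toEmbedding, f (e p) := by simp [sum_map]
    _ = _ := sum_finset_product _ _ _ fun p => by simp [mem_consSlice, e, Fin.consEquiv]

end Slice

lemma mul_log_two_le_log_one_add {x : ℝ} (h0 : 0 ≤ x) (h1 : x ≤ 1) : x * log 2 ≤ log (1 + x) := by
  have := strictConcaveOn_log_Ioi.concaveOn.2 (x := 1) (y := 2) (by norm_num) (by norm_num)
    (sub_nonneg.mpr h1) h0 (sub_add_cancel 1 x)
  simpa [show 1 - x + x * 2 = 1 + x by ring] using this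

lemma mul_log_add_mul_log_add_mul_log_two_le {a b c : ℝ} (ha : 0 ≤ a) (hb : 0 ≤ b) (hca : c ≤ a)
    (hcb : c ≤ b) : a * log a + b * log b + 2 * c * log 2 ≤ (a + b) * log (a + b) := by
  wlog hab : a ≤ b generalizing a b
  · have := this hb ha hcb hca (le_of_not_ge hab)
    rwa [add_comm b a, add_comm (b * log b)] at this
  rcases ha.eq_or_lt with rfl | ha
  · have : c * log 2 ≤ 0 := mul_nonpos_of_nonpos_of_nonneg hca (log_nonneg one_le_two)
    simp only [zero_mul, zero_add]
    linarith
  have hb : 0 < b := ha.trans_le hab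
  have hlog2 : 0 ≤ log 2 := log_nonneg one_le_two
  have hdouble : a * log 2 + a * log a ≤ a * log (a + b) := by
    rw [← mul_add, ← log_mul two_ne_zero ha.ne']
    exact mul_le_mul_of_nonneg_left (log_le_log (by positivity) (by linarith)) ha.le
  have hratio : a * log 2 ≤ b * (log (a + b) - log b) := calc
    a * log 2 = b * (a / b * log 2) := by field_simp
    _ ≤ b * log (1 + a / b) := by
      gcongr
      exact mul_log_two_le_log_one_add (by positivity) ((div_le_one hb).mpr hab)
    _ = b * (log (a + b) - log b) := by
      rw [one_add_div hb.ne', log_div (by positivity) hb.ne', add_comm b]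
  have := mul_le_mul_of_nonneg_right hca hlog2
  linarith [mul_sub b (log (a + b)) (log b)]

lemma two_pow_le_of_mul_le_of_mul_log_two_le {h : ℕ} {t e : ℝ} (ht : 0 < t) (he : h * t ≤ e)
    (hiso : e * log 2 ≤ t * log t) : 2 ^ h ≤ t := by
  have hlog : log (2 ^ h) ≤ log t := by
    rw [log_pow]
    refine le_of_mul_le_mul_right ?_ ht
    nlinarith [log_pos one_lt_two]
  exact (log_le_log_iff (by positivity) ht).mp hlog

lemma two_pow_mul_sub_mul_log_two_le {n h : ℕ} {t : ℝ} (hn : h + 1 ≤ n) (ht : 2 ^ h ≤ t)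
    (ht' : t ≤ 2 ^ (n - 1)) : 2 ^ h * (n - h) * log 2 ≤ t * (n * log 2 - log t) := by
  set g : ℝ → ℝ := fun t => n * log 2 * t + negMulLog t
  have hg : ConcaveOn ℝ (Set.Ici 0) g :=
    ((concaveOn_id (convex_Ici 0)).smul (by positivity)).add concaveOn_negMulLog
  have hg_pow (k : ℕ) : g (2 ^ k) = 2 ^ k * (n - k) * log 2 := by
    simp only [g, negMulLog, log_pow]
    ring
  have hmin := hg.min_le_of_mem_Icc (by simp [Set.mem_Ici])
    (by simp [Set.mem_Ici]) ⟨ht, ht'⟩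
  have hkey : (2 : ℝ) ^ h * (n - h) ≤ 2 ^ (n - 1) := by
    obtain ⟨k, rfl⟩ : ∃ k, n = h + k + 1 := ⟨n - h - 1, by omega⟩
    have hk : (k : ℝ) + 1 ≤ 2 ^ k := by exact_mod_cast Nat.lt_two_pow_self
    rw [Nat.add_sub_cancel, pow_add]
    push_cast
    nlinarith [pow_pos (two_pos (α := ℝ)) h]
  calc 2 ^ h * (n - h) * log 2 ≤ min (g (2 ^ h)) (g (2 ^ (n - 1))) := by
        rw [hg_pow, hg_pow, Nat.cast_sub (by omega : 1 ≤ n), Nat.cast_one, sub_sub_cancel, mul_one]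
        exact le_min le_rfl (mul_le_mul_of_nonneg_right hkey (log_nonneg one_le_two))
    _ ≤ g t := hmin
    _ = t * (n * log 2 - log t) := by simp only [g, negMulLog]; ring

section Isoperimetric

variable {n : ℕ}

lemma card_interedges_cubeGraph_succ (s : Finset (Fin (n + 1) → Bool)) :
    #((cubeGraph (n + 1)).interedges s s) =
      #((cubeGraph n).interedges (consSlice s false) (consSlice s false)) +
      #((cubeGraph n).interedges (consSlice s true) (consSlice s true)) +
      2 * #(consSlice s false ∩ consSlice s true) := by
  simp only [SimpleGraph.card_interedges_eq_sum, card_filter]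
  rw [sum_eq_sum_consSlice]
  simp only [sum_eq_sum_consSlice s (fun y => if (cubeGraph (n + 1)).Adj _ y then 1 else 0),
    Fintype.sum_bool, cubeGraph_cons_adj_cons]
  simp only [true_and, ne_eq, not_true_eq_false, false_and, or_false, Bool.true_eq_false,
    Bool.false_eq_true, not_false_eq_true, false_or]
  simp only [sum_ite_eq, sum_boole, Nat.cast_id, sum_add_distrib, filter_mem_eq_inter]
  rw [inter_comm (consSlice s true)]
  ring

lemma card_eq_card_consSlice_add_card_consSlice (s : Finset (Fin (n + 1) → Bool)) :
    #s = #(consSlice s false) + #(consSlice s true) := by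
  simp only [card_eq_sum_ones, sum_eq_sum_consSlice s, Fintype.sum_bool, add_comm]

theorem card_interedges_cubeGraph_mul_log_two_le (s : Finset (Fin n → Bool)) :
    #((cubeGraph n).interedges s s) * log 2 ≤ #s * log #s := by
  induction n with
  | zero =>
    have hempty : (cubeGraph 0).interedges s s = ∅ := by
      ext ⟨x, y⟩
      simp [SimpleGraph.mk_mem_interedges_iff, Subsingleton.elim x y]
    rcases (#s).eq_zero_or_pos with hs | hs
    · simp [hempty, hs]
    · simpa [hempty] using mul_log_nonneg (Nat.one_le_cast.mpr hs)
  | succ n ih =>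
    set s₀ := consSlice s false
    set s₁ := consSlice s true
    rw [card_interedges_cubeGraph_succ, card_eq_card_consSlice_add_card_consSlice]
    push_cast
    have hmix := mul_log_add_mul_log_add_mul_log_two_le (Nat.cast_nonneg #s₀)
      (Nat.cast_nonneg #s₁) (Nat.cast_le.mpr (card_le_card inter_subset_left))
      (Nat.cast_le.mpr (card_le_card (inter_subset_right (s₁ := s₀) (s₂ := s₁))))
    linarith [ih s₀, ih s₁]

end Isoperimetric

theorem two_pow_mul_le_card_interedges_compl_cubeGraph {n h : ℕ} (hn : h + 1 ≤ n)
    {s : Finset (Fin n → Bool)} (hs : s.Nonempty) (hs' : 2 * #s ≤ 2 ^ n)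
    (hdeg : h * #s ≤ #((cubeGraph n).interedges s s)) :
    2 ^ h * (n - h) ≤ #((cubeGraph n).interedges s sᶜ) := by
  set e := #((cubeGraph n).interedges s s)
  set d := #((cubeGraph n).interedges s sᶜ)
  have hsum : (e : ℝ) + d = n * #s := by
    have := (cubeGraph n).card_interedges_add_card_interedges_compl_eq_sum_degree s
    simp only [cubeGraph_degree, sum_const, smul_eq_mul] at this
    rw [mul_comm] at this
    exact_mod_cast this
  have hiso := card_interedges_cubeGraph_mul_log_two_le s
  have hpos : (0 : ℝ) < #s := by exact_mod_cast hs.card_pos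
  have hlow := two_pow_le_of_mul_le_of_mul_log_two_le hpos (by exact_mod_cast hdeg) hiso
  have hup : (#s : ℝ) ≤ 2 ^ (n - 1) := by
    have : 2 ^ n = 2 * 2 ^ (n - 1) := by rw [← pow_succ']; congr; omega
    exact_mod_cast (by omega : #s ≤ 2 ^ (n - 1))
  have hconc := two_pow_mul_sub_mul_log_two_le hn hlow hup
  have hreal : ((2 ^ h * (n - h) : ℕ) : ℝ) ≤ d := by
    push_cast [Nat.cast_sub (by omega : h ≤ n)]
    refine le_of_mul_le_mul_right ?_ (log_pos one_lt_two)
    calc 2 ^ h * (n - h) * log 2 ≤ #s * (n * log 2 - log #s) := hconc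
      _ ≤ (n * #s - e) * log 2 := by linarith
      _ = d * log 2 := by rw [← hsum]; ring
  exact_mod_cast hreal

theorem two_pow_mul_le_ncard_of_isEmbEdgeCut {n h : ℕ} (hn : h + 1 ≤ n)
    {F : Set (Sym2 (Fin n → Bool))} (hF : F.Finite)
    (hcut : IsEmbEdgeCut (cubeGraph n) (cubeGraph h) F) : 2 ^ h * (n - h) ≤ F.ncard := by
  classical
  obtain ⟨-, hdisc, hemb⟩ := hcut
  set G' := (cubeGraph n).deleteEdges F
  have hdeg (v : Fin n → Bool) : h ≤ G'.degree v := by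
    obtain ⟨A, hvA, ⟨φ⟩⟩ := hemb v
    have := ((Copy.induce G' A).comp φ.toCopy).degree_le (φ.symm ⟨v, hvA⟩)
    rw [cubeGraph_degree] at this
    convert this using 2
    simp [Copy.comp_apply, Copy.induce]
  obtain ⟨s, hs, hhalf, hclosed⟩ := exists_forall_adj_mem_of_not_connected hdisc
  have hinner : h * #s ≤ #((cubeGraph n).interedges s s) := calc
    h * #s = ∑ _ ∈ s, h := by rw [sum_const, smul_eq_mul, mul_comm]
    _ ≤ ∑ x ∈ s, G'.degree x := sum_le_sum fun x _ => hdeg x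
    _ ≤ _ := sum_degree_le_card_interedges _ (deleteEdges_le F) hclosed
  calc 2 ^ h * (n - h) ≤ #((cubeGraph n).interedges s sᶜ) :=
        two_pow_mul_le_card_interedges_compl_cubeGraph hn hs (by simpa using hhalf) hinner
    _ = (↑((cubeGraph n).edgeBoundary s) : Set _).ncard := by
        rw [Set.ncard_coe_finset, card_edgeBoundary]
    _ ≤ F.ncard := Set.ncard_le_ncard (coe_edgeBoundary_subset hclosed) hF

lemma Fin.card_filter_le_val (n h : ℕ) : #{i : Fin n | h ≤ (i : ℕ)} = n - h := by
  have := card_filter_add_card_filter_not (s := (univ : Finset (Fin n))) fun i => (i : ℕ) < h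
  simp only [Fin.card_filter_val_lt, not_lt, card_univ, Fintype.card_fin] at this
  omega

section Subcube

variable {n h : ℕ}

def subcube (h : ℕ) (v : Fin n → Bool) : Finset (Fin n → Bool) :=
  {x | ∀ i : Fin n, h ≤ i → x i = v i}

lemma mem_subcube {v x : Fin n → Bool} : x ∈ subcube h v ↔ ∀ i : Fin n, h ≤ i → x i = v i := by
  simp [subcube]

def subcubeEquiv (hle : h ≤ n) (v : Fin n → Bool) :
    (Fin h → Bool) ≃ (subcube h v : Set (Fin n → Bool)) where
  toFun y := ⟨fun i => if hi : (i : ℕ) < h then y ⟨i, hi⟩ else v i,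
    mem_subcube.mpr fun i hi => dif_neg (not_lt.mpr hi)⟩
  invFun x j := x.1 (Fin.castLE hle j)
  left_inv y := by ext j; simp
  right_inv x := by
    ext i
    by_cases hi : (i : ℕ) < h
    · simp [hi]
    · simp [hi, mem_subcube.mp x.2 i (not_lt.mp hi)]

lemma hammingDist_subcubeEquiv (hle : h ≤ n) (v : Fin n → Bool) (y z : Fin h → Bool) :
    hammingDist (subcubeEquiv hle v y : Fin n → Bool) (subcubeEquiv hle v z) =
      hammingDist y z := by
  unfold hammingDist
  rw [← card_map (Fin.castLEEmb hle)]
  congr 1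
  ext i
  rw [mem_filter, mem_map]
  by_cases hi : (i : ℕ) < h
  · simp only [subcubeEquiv, Equiv.coe_fn_mk, hi, dite_true]
    exact ⟨fun hne => ⟨⟨i, hi⟩, by simpa using hne, rfl⟩, by rintro ⟨a, hne, rfl⟩; simpa using hne⟩
  · simp only [subcubeEquiv, Equiv.coe_fn_mk, hi, dite_false, ne_eq, not_true_eq_false,
      and_false, false_iff]
    rintro ⟨a, -, rfl⟩
    exact hi a.2

def subcubeIso (hle : h ≤ n) (v : Fin n → Bool) :
    cubeGraph h ≃g (cubeGraph n).induce (subcube h v : Set (Fin n → Bool)) where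
  toEquiv := subcubeEquiv hle v
  map_rel_iff' {y z} := by
    rw [comap_adj, Function.Embedding.subtype_apply, Function.Embedding.subtype_apply,
      cubeGraph_adj_iff_hammingDist, cubeGraph_adj_iff_hammingDist]
    exact congrArg (· = 1) (hammingDist_subcubeEquiv hle v y z) |>.to_iff

lemma mem_subcube_iff_of_mem_subcube {v w x y : Fin n → Bool} (hx : x ∈ subcube h v)
    (hy : y ∈ subcube h v) : x ∈ subcube h w ↔ y ∈ subcube h w := by
  simp only [mem_subcube] at *
  exact forall₂_congr fun i hi => by rw [hx i hi, hy i hi]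

lemma induce_deleteEdges_edgeBoundary_subcube (v w : Fin n → Bool) :
    ((cubeGraph n).deleteEdges ((cubeGraph n).edgeBoundary (subcube h w))).induce
      (subcube h v : Set (Fin n → Bool)) = (cubeGraph n).induce (subcube h v : Set _) := by
  ext x y
  simp only [comap_adj, Function.Embedding.subtype_apply, deleteEdges_edgeBoundary_adj,
    and_iff_left_iff_imp]
  exact fun _ => mem_subcube_iff_of_mem_subcube x.2 y.2

lemma card_subcube (hle : h ≤ n) (v : Fin n → Bool) : #(subcube h v) = 2 ^ h := by
  rw [card_eq_of_equiv_fintype (subcubeEquiv hle v).symm]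
  simp

lemma update_not_self_mem_subcube_iff {v x : Fin n → Bool} (hx : x ∈ subcube h v) (i : Fin n) :
    Function.update x i (!x i) ∈ subcube h v ↔ (i : ℕ) < h := by
  rw [mem_subcube] at hx ⊢
  constructor
  · intro hu
    by_contra hi
    have := hu i (not_lt.mp hi)
    rw [Function.update_self, ← hx i (not_lt.mp hi)] at this
    simp at this
  · intro hi j hj
    rw [Function.update_of_ne (by rintro rfl; omega), hx j hj]

lemma card_filter_adj_compl_subcube {v x : Fin n → Bool} (hx : x ∈ subcube h v) :
    #{y ∈ (subcube h v)ᶜ | (cubeGraph n).Adj x y} = n - h := by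
  have himage : {y ∈ (subcube h v)ᶜ | (cubeGraph n).Adj x y} =
      ({i : Fin n | h ≤ (i : ℕ)} : Finset _).image fun i => Function.update x i (!x i) := by
    ext y
    simp only [mem_filter, mem_compl, cubeGraph_adj_iff_exists_update, mem_image, mem_univ,
      true_and]
    constructor
    · rintro ⟨hy, i, rfl⟩
      exact ⟨i, not_lt.mp ((update_not_self_mem_subcube_iff hx i).not.mp hy), rfl⟩
    · rintro ⟨i, hi, rfl⟩
      exact ⟨(update_not_self_mem_subcube_iff hx i).not.mpr (not_lt.mpr hi), i, rfl⟩
  rw [himage, card_image_of_injective _ (injective_update_not_self x), Fin.card_filter_le_val n h]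

lemma card_interedges_subcube_compl (hle : h ≤ n) (v : Fin n → Bool) :
    #((cubeGraph n).interedges (subcube h v) (subcube h v)ᶜ) = 2 ^ h * (n - h) := by
  rw [SimpleGraph.card_interedges_eq_sum,
    sum_congr rfl fun x hx => card_filter_adj_compl_subcube hx, sum_const, card_subcube hle,
    smul_eq_mul]

theorem isEmbEdgeCut_edgeBoundary_subcube (hn : h + 1 ≤ n) :
    IsEmbEdgeCut (cubeGraph n) (cubeGraph h)
      ((cubeGraph n).edgeBoundary (subcube h fun _ => false)) := by
  set B : Finset (Fin n → Bool) := subcube h fun _ => false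
  refine ⟨coe_edgeBoundary_subset_edgeSet B, ?_,
    fun v => ⟨subcube h v, mem_subcube.mpr fun _ _ => rfl, ?_⟩⟩
  · refine not_connected_of_forall_adj_mem (s := (B : Set (Fin n → Bool)))
      (fun x hx y hxy => (deleteEdges_edgeBoundary_adj.mp hxy).2.mp hx)
      (a := fun _ => false) (b := Function.update (fun _ => false) ⟨h, hn⟩ true) ?_ ?_
    · simp [B, mem_subcube]
    · simp only [B, mem_coe, mem_subcube, not_forall]
      exact ⟨⟨h, hn⟩, le_rfl, by simp⟩
  · rw [induce_deleteEdges_edgeBoundary_subcube]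
    exact ⟨subcubeIso (by omega) v⟩

end Subcube

theorem stmt4_general (n h : ℕ) (h2 : h + 1 ≤ n) :
    embEdgeConn (cubeGraph n) (cubeGraph h) = 2 ^ h * (n - h) := by
  refine IsLeast.csInf_eq ⟨⟨_, Set.toFinite _, ?_, isEmbEdgeCut_edgeBoundary_subcube h2⟩, ?_⟩
  · rw [Set.ncard_coe_finset, card_edgeBoundary, card_interedges_subcube_compl (by omega)]
  · rintro k ⟨F, hF, rfl, hcut⟩
    exact two_pow_mul_le_ncard_of_isEmbEdgeCut h2 hF hcut

/-- `η_h(Q_n) = 2^h (n-h)` for `1 ≤ h ≤ n-1`. -/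
theorem stmt4 (n h : ℕ) (h1 : 1 ≤ h) (h2 : h + 1 ≤ n) :
    embEdgeConn (cubeGraph n) (cubeGraph h) = 2 ^ h * (n - h) :=
  stmt4_general n h h2
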